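/- arXiv:1903.05744 — 9 statements merged into one kernel-verified Lean document; each statement's English description precedes it below -/
import Mathlib

section
/- Let A be a symmetric n×n real matrix of rank r, and let S ⊆ {1,…,n} with |S| = r be such that the principal submatrix A[S] is nonsingular. Define H ∈ ℝⁿˣⁿ to be zero everywhere except that H[S] = (A[S])⁻¹. Then H is symmetric and satisfies AHA = A and HAH = H. -/
open Matrix

theorem symmetric_block_construction (n r : ℕ) (A : Matrix (Fin n) (Fin n) ℝ)
    (hAsym : Aᵀ = A) (hrank : A.rank = r)
    (S : Fin r → Fin n) (hS : Function.Injective S)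
    (hdet : (A.submatrix S S).det ≠ 0)
    (H : Matrix (Fin n) (Fin n) ℝ)
    (hHS : H.submatrix S S = (A.submatrix S S)⁻¹)
    (hH0 : ∀ i j, (i ∉ Set.range S ∨ j ∉ Set.range S) → H i j = 0) :
    Hᵀ = H ∧ A * H * A = A ∧ H * A * H = H := by
  set M : Matrix (Fin r) (Fin r) ℝ := A.submatrix S S with hM
  set E : Matrix (Fin n) (Fin r) ℝ := Matrix.of (fun i a => if S a = i then (1:ℝ) else 0) with hE
  have hMunit : IsUnit M.det := isUnit_iff_ne_zero.mpr hdet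
  have hMinvM : M⁻¹ * M = 1 := nonsing_inv_mul M hMunit
  have hMMinv : M * M⁻¹ = 1 := mul_nonsing_inv M hMunit
  have hMsym : Mᵀ = M := by
    ext k l
    simp only [hM, transpose_apply, submatrix_apply]
    exact congrFun (congrFun hAsym (S k)) (S l)
  -- sum helpers
  have hsum1 : ∀ (f : Fin r → ℝ) (k : Fin r), (∑ a, if S a = S k then f a else 0) = f k := by
    intro f k
    rw [Finset.sum_eq_single k]
    · rw [if_pos rfl]
    · intro b _ hb
      exact if_neg fun h => hb (hS h)
    · intro h; exact absurd (Finset.mem_univ k) h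
  have hsum0 : ∀ (f : Fin r → ℝ) (i : Fin n), i ∉ Set.range S →
      (∑ a, if S a = i then f a else 0) = 0 := by
    intro f i hi
    apply Finset.sum_eq_zero
    intro a _
    exact if_neg fun h => hi ⟨a, h⟩
  -- basic products with E
  have hAE : A * E = A.submatrix id S := by
    ext i l
    simp [Matrix.mul_apply, hE, mul_ite, mul_one, mul_zero, Finset.sum_ite_eq]
  have hEtA : Eᵀ * A = A.submatrix S id := by
    ext k j
    simp [Matrix.mul_apply, hE, ite_mul, one_mul, zero_mul, Finset.sum_ite_eq]
  have hEtAE : Eᵀ * A * E = M := by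
    rw [hEtA]
    ext k l
    simp [Matrix.mul_apply, hE, mul_ite, mul_one, mul_zero, Finset.sum_ite_eq, hM]
  -- H = E * M⁻¹ * Eᵀ
  have hHEE : H = E * M⁻¹ * Eᵀ := by
    ext i j
    have hexp : (E * M⁻¹ * Eᵀ) i j
        = ∑ b, (∑ a, if S a = i then M⁻¹ a b else 0) * (if S b = j then (1:ℝ) else 0) := by
      simp [Matrix.mul_apply, hE, ite_mul, one_mul, zero_mul, Finset.sum_mul]
    by_cases hi : i ∈ Set.range S
    · obtain ⟨k, rfl⟩ := hi
      by_cases hj : j ∈ Set.range S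
      · obtain ⟨l, rfl⟩ := hj
        rw [hexp]
        have : ∀ b, (∑ a, if S a = S k then M⁻¹ a b else 0) * (if S b = S l then (1:ℝ) else 0)
            = if S b = S l then M⁻¹ k b else 0 := by
          intro b
          rw [hsum1 (fun a => M⁻¹ a b) k]
          by_cases hb : S b = S l <;> simp [hb]
        rw [Finset.sum_congr rfl (fun b _ => this b), hsum1 (fun b => M⁻¹ k b) l]
        have := congrFun (congrFun hHS k) l
        simpa using this
      · rw [hH0 _ _ (Or.inr hj), hexp]
        apply (Finset.sum_eq_zero _).symm
        intro b _
        rw [if_neg fun h => hj ⟨b, h⟩, mul_zero]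
    · rw [hH0 _ _ (Or.inl hi), hexp]
      apply (Finset.sum_eq_zero _).symm
      intro b _
      rw [hsum0 (fun a => M⁻¹ a b) i hi, zero_mul]
  -- column space argument: A = (A * E) * V for some V
  set C : Matrix (Fin n) (Fin r) ℝ := A.submatrix id S with hC
  have hCinj : Function.Injective C.mulVecLin := by
    rw [← LinearMap.ker_eq_bot, LinearMap.ker_eq_bot']
    intro x hx
    have hMx : M.mulVec x = 0 := by
      ext k
      have := congrFun hx (S k)
      simpa [Matrix.mulVecLin_apply, Matrix.mulVec, dotProduct, hC, hM] using this
    have : M⁻¹.mulVec (M.mulVec x) = x := by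
      rw [Matrix.mulVec_mulVec, hMinvM, Matrix.one_mulVec]
    rw [hMx, Matrix.mulVec_zero] at this
    exact this.symm
  have hrankC : C.rank = r := by
    rw [Matrix.rank, LinearMap.finrank_range_of_inj hCinj, Module.finrank_pi, Fintype.card_fin]
  have hspan : Submodule.span ℝ (Set.range Cᵀ) = LinearMap.range A.mulVecLin := by
    apply Submodule.eq_of_le_of_finrank_le
    · rw [Submodule.span_le]
      rintro _ ⟨k, rfl⟩
      refine ⟨Pi.single (S k) 1, ?_⟩
      ext i
      simp [Matrix.mulVecLin_apply, hC]
    · rw [← Matrix.rank, hrank]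
      exact (hrankC.symm.trans (Matrix.rank_eq_finrank_span_cols C)).le
  have hcols : ∀ j, ∃ c : Fin r → ℝ, ∑ k, c k • Cᵀ k = fun i => A i j := by
    intro j
    have hmem : (fun i => A i j) ∈ LinearMap.range A.mulVecLin := by
      refine ⟨Pi.single j 1, ?_⟩
      ext i
      simp [Matrix.mulVecLin_apply]
    rw [← hspan] at hmem
    exact (Submodule.mem_span_range_iff_exists_fun ℝ).mp hmem
  choose Vc hVc using hcols
  set V : Matrix (Fin r) (Fin n) ℝ := Matrix.of (fun k j => Vc j k) with hV
  have hACV : C * V = A := by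
    ext i j
    have := congrFun (hVc j) i
    simp only [Finset.sum_apply, Pi.smul_apply, transpose_apply, smul_eq_mul] at this
    rw [Matrix.mul_apply]
    rw [← this]
    exact Finset.sum_congr rfl fun k _ => mul_comm _ _
  have hCAE : C = A * E := hAE.symm
  have hEtC : Eᵀ * C = M := by rw [hCAE, ← Matrix.mul_assoc, hEtAE]
  refine ⟨?_, ?_, ?_⟩
  · rw [hHEE, Matrix.transpose_mul, Matrix.transpose_mul, Matrix.transpose_transpose,
      Matrix.transpose_nonsing_inv, hMsym, Matrix.mul_assoc]
  · have hEtA' : Eᵀ * A = M * V := by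
      rw [← hACV, ← Matrix.mul_assoc, hEtC]
    calc A * H * A = (A * E) * M⁻¹ * (Eᵀ * A) := by
          rw [hHEE]; simp only [Matrix.mul_assoc]
      _ = C * (M⁻¹ * M) * V := by
          rw [← hCAE, hEtA']; simp only [Matrix.mul_assoc]
      _ = A := by rw [hMinvM, Matrix.mul_one, hACV]
  · calc H * A * H = E * M⁻¹ * (Eᵀ * A * E) * M⁻¹ * Eᵀ := by
          rw [hHEE]; simp only [Matrix.mul_assoc]
      _ = E * (M⁻¹ * M * M⁻¹) * Eᵀ := by
          rw [hEtAE]; simp only [Matrix.mul_assoc]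
      _ = H := by rw [hMinvM, Matrix.one_mul, hHEE, Matrix.mul_assoc]
end

section
/- Let A be a symmetric n×n real matrix of rank r, let S with |S| = r index a nonsingular principal submatrix A[S], and let T be obtained from S by swapping one element of S with one element of its complement. If |det(A[T])| ≤ (1+ε)|det(A[S])|, then |det(A[S,T])| ≤ √(1+ε)·|det(A[S])|. -/
open Matrix

private lemma mul_oneSub {m n r : ℕ} (X : Matrix (Fin m) (Fin n) ℝ) (S : Fin r → Fin n) :
    X * (1 : Matrix (Fin n) (Fin n) ℝ).submatrix id S = X.submatrix id S := by
  ext i j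
  simp [Matrix.mul_apply, Matrix.one_apply]

private lemma oneSub_mul {m n r : ℕ} (X : Matrix (Fin n) (Fin m) ℝ) (S : Fin r → Fin n) :
    (1 : Matrix (Fin n) (Fin n) ℝ).submatrix S id * X = X.submatrix S id := by
  ext i j
  simp [Matrix.mul_apply, Matrix.one_apply]

theorem swap_det_bound_symmetric (n r : ℕ) (A : Matrix (Fin n) (Fin n) ℝ)
    (hAsym : Aᵀ = A) (hrank : A.rank = r) (ε : ℝ) (hε : 0 ≤ ε)
    (S : Fin r → Fin n) (hS : Function.Injective S)
    (hdetS : (A.submatrix S S).det ≠ 0)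
    (T : Fin r → Fin n) (k : Fin r) (v : Fin n) (hv : v ∉ Set.range S)
    (hT : T = Function.update S k v)
    (hswap : |(A.submatrix T T).det| ≤ (1 + ε) * |(A.submatrix S S).det|) :
    |(A.submatrix S T).det| ≤ Real.sqrt (1 + ε) * |(A.submatrix S S).det| := by
  classical
  set M : Matrix (Fin r) (Fin r) ℝ := A.submatrix S S with hMdef
  have hUnit : IsUnit M := (Matrix.isUnit_iff_isUnit_det _).2 (isUnit_iff_ne_zero.2 hdetS)
  set B : Matrix (Fin n) (Fin r) ℝ := A.submatrix id S with hBdef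
  -- rank of B is r
  have hMrank : M.rank = r := by
    have := Matrix.rank_of_isUnit _ hUnit
    simpa using this
  have hFB : (1 : Matrix (Fin n) (Fin n) ℝ).submatrix S id * B = M := by
    rw [oneSub_mul]
    simp [hBdef, hMdef, Matrix.submatrix_submatrix]
  have hBr : B.rank = r := by
    refine le_antisymm (by simpa using B.rank_le_card_width) ?_
    calc r = ((1 : Matrix (Fin n) (Fin n) ℝ).submatrix S id * B).rank := by rw [hFB, hMrank]
      _ ≤ B.rank := Matrix.rank_mul_le_right _ _
  -- range of B = range of A
  have hrange : LinearMap.range B.mulVecLin = LinearMap.range A.mulVecLin := by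
    apply Submodule.eq_of_le_of_finrank_le
    · have hBA : B = A * (1 : Matrix (Fin n) (Fin n) ℝ).submatrix id S :=
        (mul_oneSub A S).symm
      rw [hBA, Matrix.mulVecLin_mul]
      exact LinearMap.range_comp_le_range _ _
    · show A.rank ≤ B.rank
      rw [hrank, hBr]
  -- factorization A = B * X
  obtain ⟨X, hAX⟩ : ∃ X : Matrix (Fin r) (Fin n) ℝ, A = B * X := by
    have hcol : ∀ j, ∃ x : Fin r → ℝ, B.mulVec x = A.mulVec (Pi.single j 1) := by
      intro j
      have : A.mulVec (Pi.single j 1) ∈ LinearMap.range B.mulVecLin := by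
        rw [hrange]; exact ⟨Pi.single j 1, rfl⟩
      obtain ⟨x, hx⟩ := this
      exact ⟨x, hx⟩
    choose Xf hXcol using hcol
    refine ⟨fun i j => Xf j i, ?_⟩
    ext i j
    have h := congrFun (hXcol j) i
    simp [Matrix.mulVec, dotProduct, Pi.single_apply, mul_ite] at h
    show A i j = ∑ x, B i x * Xf j x
    exact h.symm
  -- A = B * M⁻¹ * (A.submatrix S id)
  have hFA : A.submatrix S id = M * X := by
    rw [← oneSub_mul A S, hAX, ← Matrix.mul_assoc, hFB]
  have hXeq : X = M⁻¹ * A.submatrix S id := by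
    rw [hFA, ← Matrix.mul_assoc, Matrix.nonsing_inv_mul M (isUnit_iff_ne_zero.2 hdetS), Matrix.one_mul]
  have hAfac : A = B * M⁻¹ * A.submatrix S id := by
    rw [Matrix.mul_assoc, ← hXeq, hAX]
  -- A[T,T] = A[T,S] * M⁻¹ * A[S,T]
  have hTT : A.submatrix T T = A.submatrix T S * M⁻¹ * A.submatrix S T := by
    have h1 : A.submatrix T id = (1 : Matrix (Fin n) (Fin n) ℝ).submatrix T id * A := by
      rw [oneSub_mul]
    have h2 : (1 : Matrix (Fin n) (Fin n) ℝ).submatrix T id * B = A.submatrix T S := by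
      rw [oneSub_mul]; simp [hBdef, Matrix.submatrix_submatrix]
    calc A.submatrix T T = (A.submatrix T id).submatrix id T := by
          simp [Matrix.submatrix_submatrix]
      _ = (A.submatrix T id) * (1 : Matrix (Fin n) (Fin n) ℝ).submatrix id T := by
          rw [mul_oneSub]
      _ = ((1 : Matrix (Fin n) (Fin n) ℝ).submatrix T id * (B * M⁻¹ * A.submatrix S id)) *
            (1 : Matrix (Fin n) (Fin n) ℝ).submatrix id T := by rw [h1, ← hAfac]
      _ = (A.submatrix T S * M⁻¹) * ((A.submatrix S id) *
            (1 : Matrix (Fin n) (Fin n) ℝ).submatrix id T) := by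
          rw [← h2]; simp only [Matrix.mul_assoc]
      _ = A.submatrix T S * M⁻¹ * A.submatrix S T := by
          rw [mul_oneSub]; simp [Matrix.submatrix_submatrix]
  -- symmetry: A[T,S] = (A[S,T])ᵀ
  have hsymTS : A.submatrix T S = (A.submatrix S T)ᵀ := by
    rw [Matrix.transpose_submatrix, hAsym]
  -- determinant identity
  set d : ℝ := (A.submatrix S T).det with hd
  have hdetTT : (A.submatrix T T).det = d * M.det⁻¹ * d := by
    rw [hTT, Matrix.det_mul, Matrix.det_mul, hsymTS, Matrix.det_transpose,
      Matrix.det_nonsing_inv]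
    simp [Ring.inverse_eq_inv']
    rfl
  have hd2 : d ^ 2 = (A.submatrix T T).det * M.det := by
    rw [hdetTT, show d * M.det⁻¹ * d * M.det = d ^ 2 * (M.det⁻¹ * M.det) by ring,
      inv_mul_cancel₀ hdetS, mul_one]
  have habs : |d| ^ 2 ≤ (1 + ε) * |M.det| ^ 2 := by
    have : |d| ^ 2 = |(A.submatrix T T).det| * |M.det| := by
      rw [← abs_pow, hd2, abs_mul]
    rw [this]
    calc |(A.submatrix T T).det| * |M.det| ≤ ((1 + ε) * |M.det|) * |M.det| := by
          exact mul_le_mul_of_nonneg_right hswap (abs_nonneg _)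
      _ = (1 + ε) * |M.det| ^ 2 := by ring
  have h1e : (0:ℝ) ≤ 1 + ε := by linarith
  calc |d| = Real.sqrt (|d| ^ 2) := by rw [Real.sqrt_sq (abs_nonneg d)]
    _ ≤ Real.sqrt ((1 + ε) * |M.det| ^ 2) := Real.sqrt_le_sqrt habs
    _ = Real.sqrt (1 + ε) * |M.det| := by
        rw [Real.sqrt_mul h1e, Real.sqrt_sq (abs_nonneg _)]
end

section
/- Let A be a symmetric n×n real matrix of rank r, and suppose the principal submatrix Ã = A[S] (with |S| = r) is nonsingular and no swap of one index of S with one from its complement increases |det| of the corresponding nonsingular principal submatrix by a factor exceeding 1+ε. Let H be zero except H[S] = Ã⁻¹. Then ‖H‖₁ ≤ r²(1+ε)·‖H*‖₁ for every symmetric matrix H* satisfying AH*A = A and H*AH* = H*, where ‖·‖₁ denotes the entrywise 1-norm. -/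
open Matrix

private lemma aux_abs_mul_le {a b e : ℝ} (ha : a ^ 2 ≤ e) (hb : b ^ 2 ≤ e) :
    |a| * |b| ≤ e := by
  nlinarith [sq_nonneg (|a| - |b|), sq_abs a, sq_abs b, abs_nonneg a, abs_nonneg b]

theorem symmetric_local_search_approximation (n r : ℕ) (A : Matrix (Fin n) (Fin n) ℝ)
    (hAsym : Aᵀ = A) (hrank : A.rank = r) (ε : ℝ) (hε : 0 ≤ ε)
    (S : Fin r → Fin n) (hS : Function.Injective S)
    (hdetS : (A.submatrix S S).det ≠ 0)
    (hlocal : ∀ (k : Fin r) (v : Fin n), v ∉ Set.range S →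
      |(A.submatrix (Function.update S k v) (Function.update S k v)).det| ≤
        (1 + ε) * |(A.submatrix S S).det|)
    (H : Matrix (Fin n) (Fin n) ℝ)
    (hHS : H.submatrix S S = (A.submatrix S S)⁻¹)
    (hH0 : ∀ i j, (i ∉ Set.range S ∨ j ∉ Set.range S) → H i j = 0)
    (Hstar : Matrix (Fin n) (Fin n) ℝ) (hsym : Hstarᵀ = Hstar)
    (h1 : A * Hstar * A = A) (h2 : Hstar * A * Hstar = Hstar) :
    ∑ i, ∑ j, |H i j| ≤ (r : ℝ) ^ 2 * (1 + ε) * ∑ i, ∑ j, |Hstar i j| := by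
  classical
  set Atil : Matrix (Fin r) (Fin r) ℝ := A.submatrix S S with hAtil
  have hU : IsUnit Atil.det := isUnit_iff_ne_zero.mpr hdetS
  set C : Matrix (Fin n) (Fin r) ℝ := A.submatrix id S with hCdef
  set Rm : Matrix (Fin r) (Fin n) ℝ := A.submatrix S id with hRdef
  -- selection matrices
  set E : Matrix (Fin n) (Fin r) ℝ := fun i k => if i = S k then 1 else 0 with hEdef
  set F : Matrix (Fin r) (Fin n) ℝ := fun k i => if i = S k then 1 else 0 with hFdef
  have hCE : C = A * E := by
    ext i k
    rw [mul_apply]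
    simp [hCdef, hEdef]
  have hFC : Atil = F * C := by
    ext k l
    rw [mul_apply]
    simp [hAtil, hFdef, hCdef]
  -- rank of C is r
  have hrAtil : Atil.rank = r := by
    rw [Matrix.rank_of_isUnit Atil ((Matrix.isUnit_iff_isUnit_det _).mpr hU)]
    simp
  have hrC : C.rank = r := by
    refine le_antisymm ?_ ?_
    · simpa using Matrix.rank_le_card_width C
    · calc r = Atil.rank := hrAtil.symm
        _ = (F * C).rank := by rw [hFC]
        _ ≤ C.rank := Matrix.rank_mul_le_right F C
  -- range of C.mulVecLin = range of A.mulVecLin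
  have hWV : LinearMap.range C.mulVecLin = LinearMap.range A.mulVecLin := by
    apply Submodule.eq_of_le_of_finrank_eq
    · rw [hCE, Matrix.mulVecLin_mul]
      exact LinearMap.range_comp_le_range _ _
    · show Module.finrank ℝ _ = Module.finrank ℝ _
      have : C.rank = A.rank := by rw [hrC, hrank]
      exact this
  -- the factorization A = C * Atil⁻¹ * Rm
  have hfact : C * Atil⁻¹ * Rm = A := by
    ext i j
    -- column j of A is in the range of C.mulVecLin
    have hmem : (fun i => A i j) ∈ LinearMap.range C.mulVecLin := by
      rw [hWV]
      refine ⟨Pi.single j 1, ?_⟩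
      funext i'
      simp [Matrix.mulVecLin_apply, Matrix.mulVec, dotProduct, Pi.single_apply]
    obtain ⟨x, hx⟩ := hmem
    have hx' : C.mulVec x = fun i => A i j := hx
    have hAx : Atil.mulVec x = fun k => A (S k) j := by
      funext k
      have := congrFun hx' (S k)
      simpa [Matrix.mulVec, dotProduct, hAtil, hCdef, mul_apply] using this
    have hxeq : x = Atil⁻¹.mulVec (fun k => A (S k) j) := by
      rw [← hAx, Matrix.mulVec_mulVec, Matrix.nonsing_inv_mul _ hU, Matrix.one_mulVec]
    have : (C * Atil⁻¹ * Rm) i j = (C.mulVec (Atil⁻¹.mulVec (fun k => A (S k) j))) i := by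
      simp [mul_apply, Matrix.mulVec, dotProduct, hRdef, Finset.mul_sum, Finset.sum_mul,
        mul_assoc]
      rw [Finset.sum_comm]
    rw [this, ← hxeq, hx']
  -- general minor identity
  have hsub : ∀ f g : Fin r → Fin n,
      A.submatrix f g = (A.submatrix f S) * Atil⁻¹ * (A.submatrix S g) := by
    intro f g
    ext k l
    have := congrFun (congrFun hfact (f k)) (g l)
    simp only [mul_apply, hCdef, hRdef, submatrix_apply, id] at this ⊢
    exact this.symm
  set P : Matrix (Fin r) (Fin n) ℝ := Atil⁻¹ * Rm with hPdef
  -- entrywise bound on P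
  have hPsq : ∀ (k : Fin r) (i : Fin n), (P k i) ^ 2 ≤ 1 + ε := by
    intro k i
    by_cases hi : i ∈ Set.range S
    · obtain ⟨m, rfl⟩ := hi
      have : P k (S m) = (Atil⁻¹ * Atil) k m := by
        simp [hPdef, mul_apply, hRdef, hAtil]
      rw [this, Matrix.nonsing_inv_mul _ hU]
      by_cases hkm : k = m <;> simp [Matrix.one_apply, hkm] <;> nlinarith
    · -- Cramer
      set S' := Function.update S k i with hS'def
      set d : ℝ := (A.submatrix S S').det with hd
      set D : ℝ := Atil.det with hD
      have hPki : P k i = D⁻¹ * d := by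
        have hb : P k i = (Atil⁻¹ *ᵥ (fun a => A (S a) i)) k := by
          simp [hPdef, mul_apply, Matrix.mulVec, dotProduct, hRdef]
        have hcr := Matrix.det_smul_inv_mulVec_eq_cramer Atil (fun a => A (S a) i) hU
        have hcrk := congrFun hcr k
        have hupd : Atil.updateCol k (fun a => A (S a) i) = A.submatrix S S' := by
          ext a l
          by_cases hlk : l = k <;>
            simp [Matrix.updateCol_apply, hlk, hAtil, hS'def, Function.update_apply]
        rw [Matrix.cramer_apply, hupd] at hcrk
        simp only [Pi.smul_apply, smul_eq_mul] at hcrk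
        have hmul : D * P k i = d := by rw [hb]; exact hcrk
        have hDne : D ≠ 0 := hdetS
        rw [← hmul, inv_mul_cancel_left₀ hDne]
      -- minor identity for S'
      have hST : (A.submatrix S' S).det = d := by
        have : A.submatrix S' S = (A.submatrix S S')ᵀ := by
          rw [Matrix.transpose_submatrix, hAsym]
        rw [this, Matrix.det_transpose]
      have hidentity : d ^ 2 = (A.submatrix S' S').det * D := by
        have h := hsub S' S'
        have hdet := congrArg Matrix.det h
        rw [Matrix.det_mul, Matrix.det_mul, Matrix.det_nonsing_inv,
          Ring.inverse_eq_inv'] at hdet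
        rw [hdet, hST]
        have hDne : D ≠ 0 := hdetS
        rw [← hd, ← hD]
        field_simp
      have hloc := hlocal k i hi
      have hd2 : d ^ 2 ≤ (1 + ε) * D ^ 2 := by
        calc d ^ 2 = (A.submatrix S' S').det * D := hidentity
          _ ≤ |(A.submatrix S' S').det * D| := le_abs_self _
          _ = |(A.submatrix S' S').det| * |D| := abs_mul _ _
          _ ≤ ((1 + ε) * |D|) * |D| := by
              apply mul_le_mul_of_nonneg_right hloc (abs_nonneg _)
          _ = (1 + ε) * D ^ 2 := by rw [mul_assoc, ← sq_abs]; ring_nf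
      have hD2 : (0 : ℝ) < D ^ 2 := by positivity
      rw [hPki, mul_pow]
      rw [inv_pow]
      calc (D ^ 2)⁻¹ * d ^ 2 ≤ (D ^ 2)⁻¹ * ((1 + ε) * D ^ 2) := by
            apply mul_le_mul_of_nonneg_left hd2 (by positivity)
        _ = 1 + ε := by field_simp
  -- middle identity
  have hmid : Atil = Rm * Hstar * C := by
    ext k l
    have := congrFun (congrFun h1 (S k)) (S l)
    simp only [mul_apply, hAtil, hRdef, hCdef, submatrix_apply, id] at this ⊢
    exact this.symm
  have hPT : Pᵀ = C * Atil⁻¹ := by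
    have hRT : Rmᵀ = C := by
      rw [hRdef, Matrix.transpose_submatrix, hAsym, hCdef]
    have hAT : Atilᵀ = Atil := by
      rw [hAtil, Matrix.transpose_submatrix, hAsym]
    rw [hPdef, Matrix.transpose_mul, hRT, Matrix.transpose_nonsing_inv, hAT]
  have hinv_eq : Atil⁻¹ = P * Hstar * Pᵀ := by
    rw [hPT, hPdef]
    calc Atil⁻¹ = Atil⁻¹ * (Atil * Atil⁻¹) := by
          rw [Matrix.mul_nonsing_inv _ hU, Matrix.mul_one]
      _ = Atil⁻¹ * ((Rm * Hstar * C) * Atil⁻¹) := by rw [← hmid]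
      _ = Atil⁻¹ * Rm * Hstar * (C * Atil⁻¹) := by
          simp only [Matrix.mul_assoc]
  -- entrywise bound on Atil⁻¹
  have hentry : ∀ (k l : Fin r), |Atil⁻¹ k l| ≤ (1 + ε) * ∑ i, ∑ j, |Hstar i j| := by
    intro k l
    have hexp : Atil⁻¹ k l = ∑ i, ∑ j, P k i * Hstar i j * P l j := by
      rw [hinv_eq]
      simp only [mul_apply, transpose_apply, Finset.sum_mul]
      rw [Finset.sum_comm]
    rw [hexp]
    calc |∑ i, ∑ j, P k i * Hstar i j * P l j|
        ≤ ∑ i, |∑ j, P k i * Hstar i j * P l j| := Finset.abs_sum_le_sum_abs _ _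
      _ ≤ ∑ i, ∑ j, |P k i * Hstar i j * P l j| := by
          exact Finset.sum_le_sum fun i _ => Finset.abs_sum_le_sum_abs _ _
      _ ≤ ∑ i, ∑ j, (1 + ε) * |Hstar i j| := by
          refine Finset.sum_le_sum fun i _ => Finset.sum_le_sum fun j _ => ?_
          rw [abs_mul, abs_mul]
          have key : |P k i| * |P l j| ≤ 1 + ε := aux_abs_mul_le (hPsq k i) (hPsq l j)
          calc |P k i| * |Hstar i j| * |P l j|
              = (|P k i| * |P l j|) * |Hstar i j| := by ring
            _ ≤ (1 + ε) * |Hstar i j| :=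
                mul_le_mul_of_nonneg_right key (abs_nonneg _)
      _ = (1 + ε) * ∑ i, ∑ j, |Hstar i j| := by
          rw [Finset.mul_sum]
          exact Finset.sum_congr rfl fun i _ => (Finset.mul_sum _ _ _).symm
  -- reindex the sum for H
  have hsum1 : ∑ i, ∑ j, |H i j| = ∑ k, ∑ l, |H (S k) (S l)| := by
    have hout : ∀ i : Fin n, i ∉ Set.range S → ∑ j, |H i j| = 0 := by
      intro i hi
      apply Finset.sum_eq_zero
      intro j _
      rw [hH0 i j (Or.inl hi), abs_zero]
    have step1 : ∑ i, ∑ j, |H i j| = ∑ k, ∑ j, |H (S k) j| := by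
      rw [← Finset.sum_image (g := S) (f := fun i => ∑ j, |H i j|)
        (fun k _ l _ h => hS h)]
      apply (Finset.sum_subset (Finset.subset_univ _) _).symm
      intro x _ hx
      apply hout
      intro hxr
      obtain ⟨k, rfl⟩ := hxr
      exact hx (Finset.mem_image.mpr ⟨k, Finset.mem_univ _, rfl⟩)
    rw [step1]
    apply Finset.sum_congr rfl
    intro k _
    rw [← Finset.sum_image (g := S) (f := fun j => |H (S k) j|) (fun a _ b _ h => hS h)]
    apply (Finset.sum_subset (Finset.subset_univ _) _).symm
    intro x _ hx
    rw [hH0 (S k) x (Or.inr ?_), abs_zero]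
    intro hxr
    obtain ⟨l, rfl⟩ := hxr
    exact hx (Finset.mem_image.mpr ⟨l, Finset.mem_univ _, rfl⟩)
  have hHval : ∀ k l : Fin r, H (S k) (S l) = Atil⁻¹ k l := by
    intro k l
    have := congrFun (congrFun hHS k) l
    simpa using this
  have hT : (0 : ℝ) ≤ ∑ i, ∑ j, |Hstar i j| :=
    Finset.sum_nonneg fun i _ => Finset.sum_nonneg fun j _ => abs_nonneg _
  calc ∑ i, ∑ j, |H i j| = ∑ k, ∑ l, |H (S k) (S l)| := hsum1
    _ = ∑ k : Fin r, ∑ l : Fin r, |Atil⁻¹ k l| := by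
        exact Finset.sum_congr rfl fun k _ => Finset.sum_congr rfl fun l _ => by
          rw [hHval]
    _ ≤ ∑ k : Fin r, ∑ l : Fin r, ((1 + ε) * ∑ i, ∑ j, |Hstar i j|) := by
        exact Finset.sum_le_sum fun k _ => Finset.sum_le_sum fun l _ => hentry k l
    _ = (r : ℝ) ^ 2 * (1 + ε) * ∑ i, ∑ j, |Hstar i j| := by
        simp [Finset.sum_const, Finset.card_univ, nsmul_eq_mul]
        ring
end

section
/- For A ∈ ℝᵐˣⁿ, an n×m matrix H satisfies the three conditions AHA = A, HAH = H, (AH)ᵀ = AH if and only if it satisfies the two linear conditions AHA = A and H(Iₘ − AA⁺) = 0. -/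
/-! With `P = A A⁺`, the projector onto the column space of `A`, the condition `H (I - P) = 0`
says `H P = H`. Given `A H A = A`, this forces `A H = A H P = (A H A) A⁺ = P`, which is
symmetric, and then `H A H = H P = H`. Conversely, if `A H` is symmetric then `A H P = Hᵀ Aᵀ P = Hᵀ Aᵀ = A H`
because `Aᵀ P = Aᵀ`, and so `H P = H A H P = H A H = H`. -/

open Matrix

namespace Matrix

variable {m n R : Type*} [Fintype m]

section Semiring

variable [Fintype n] [Semiring R]

theorem mul_eq_mul_of_mul_mul_eq {A : Matrix m n R} {G H : Matrix n m R}
    (hA : A * H * A = A) (hH : H * (A * G) = H) : A * H = A * G := by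
  calc A * H = A * (H * (A * G)) := by rw [hH]
    _ = A * G := by rw [← Matrix.mul_assoc, ← Matrix.mul_assoc, hA]

end Semiring

theorem mul_one_sub_eq_zero_iff [Ring R] [DecidableEq m] (X : Matrix n m R) (P : Matrix m m R) :
    X * (1 - P) = 0 ↔ X * P = X := by
  rw [Matrix.mul_sub, Matrix.mul_one, sub_eq_zero, eq_comm]

section CommSemiring

variable [Fintype n] [CommSemiring R]

theorem transpose_mul_mul_eq {A : Matrix m n R} {G : Matrix n m R}
    (hA : A * G * A = A) (hG : (A * G)ᵀ = A * G) : Aᵀ * (A * G) = Aᵀ := by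
  rw [← hG, ← transpose_mul, hA]

theorem mul_mul_eq_of_transpose_mul_eq {A : Matrix m n R} {H : Matrix n m R}
    {P : Matrix m m R} (hP : Aᵀ * P = Aᵀ) (hH : (A * H)ᵀ = A * H) : A * H * P = A * H := by
  rw [← hH, transpose_mul, Matrix.mul_assoc, hP]

end CommSemiring

end Matrix

theorem ahsym_reflexive_iff_linear_general (m n : ℕ) (A : Matrix (Fin m) (Fin n) ℝ)
    (Aplus : Matrix (Fin n) (Fin m) ℝ)
    (hp1 : A * Aplus * A = A)
    (hp3 : (A * Aplus)ᵀ = A * Aplus)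
    (H : Matrix (Fin n) (Fin m) ℝ) :
    (A * H * A = A ∧ H * A * H = H ∧ (A * H)ᵀ = A * H) ↔
      (A * H * A = A ∧ H * (1 - A * Aplus) = 0) := by
  rw [mul_one_sub_eq_zero_iff]
  have hAt : Aᵀ * (A * Aplus) = Aᵀ := transpose_mul_mul_eq hp1 hp3
  constructor
  · rintro ⟨h1, h2, h3⟩
    refine ⟨h1, ?_⟩
    calc H * (A * Aplus) = H * (A * H * (A * Aplus)) := by
          conv_lhs => rw [← h2]
          simp only [Matrix.mul_assoc]
      _ = H := by rw [mul_mul_eq_of_transpose_mul_eq hAt h3, ← Matrix.mul_assoc, h2]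
  · rintro ⟨h1, h2⟩
    have hAH : A * H = A * Aplus := mul_eq_mul_of_mul_mul_eq h1 h2
    exact ⟨h1, by rw [Matrix.mul_assoc, hAH, h2], by rw [hAH, hp3]⟩

theorem ahsym_reflexive_iff_linear (m n : ℕ) (A : Matrix (Fin m) (Fin n) ℝ)
    (Aplus : Matrix (Fin n) (Fin m) ℝ)
    (hp1 : A * Aplus * A = A) (hp2 : Aplus * A * Aplus = Aplus)
    (hp3 : (A * Aplus)ᵀ = A * Aplus) (hp4 : (Aplus * A)ᵀ = Aplus * A)
    (H : Matrix (Fin n) (Fin m) ℝ) :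
    (A * H * A = A ∧ H * A * H = H ∧ (A * H)ᵀ = A * H) ↔
      (A * H * A = A ∧ H * (1 - A * Aplus) = 0) :=
  ahsym_reflexive_iff_linear_general m n A Aplus hp1 hp3 H
end

section
/- Let A ∈ ℝᵐˣⁿ have rank r, let S index r linearly independent rows of A, and suppose Ã = A[S,T] is nonsingular and no column swap (replacing one element of T with one from its complement) increases |det(A[S,·])| by a factor exceeding 1+ε. Let H be the column-block construction over Â = A[:,T] (rows T of H equal (ÂᵀÂ)⁻¹Âᵀ, other rows zero). Then ‖H‖₁ ≤ r(1+ε)·‖H*‖₁ for every n×m matrix H* satisfying AH*A = A, H*AH* = H*, and (AH*)ᵀ = AH*. -/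
open Matrix

theorem ah_symmetric_local_search_approximation (m n r : ℕ) (A : Matrix (Fin m) (Fin n) ℝ)
    (hrank : A.rank = r) (ε : ℝ) (hε : 0 ≤ ε)
    (S : Fin r → Fin m) (hS : Function.Injective S)
    (hrows : (A.submatrix S id).rank = r)
    (T : Fin r → Fin n) (hT : Function.Injective T)
    (hdet : (A.submatrix S T).det ≠ 0)
    (hlocal : ∀ (k : Fin r) (v : Fin n), v ∉ Set.range T →
      |(A.submatrix S (Function.update T k v)).det| ≤ (1 + ε) * |(A.submatrix S T).det|)
    (H : Matrix (Fin n) (Fin m) ℝ)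
    (hHT : ∀ (a : Fin r) (j : Fin m),
      H (T a) j = (((A.submatrix id T)ᵀ * A.submatrix id T)⁻¹ * (A.submatrix id T)ᵀ) a j)
    (hH0 : ∀ i j, i ∉ Set.range T → H i j = 0)
    (Hstar : Matrix (Fin n) (Fin m) ℝ)
    (h1 : A * Hstar * A = A) (h2 : Hstar * A * Hstar = Hstar)
    (h3 : (A * Hstar)ᵀ = A * Hstar) :
    ∑ i, ∑ j, |H i j| ≤ (r : ℝ) * (1 + ε) * ∑ i, ∑ j, |Hstar i j| := by
  classical
  set B : Matrix (Fin m) (Fin r) ℝ := A.submatrix id T with hBdef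
  set At : Matrix (Fin r) (Fin r) ℝ := A.submatrix S T with hAtdef
  set R0 : Matrix (Fin r) (Fin n) ℝ := A.submatrix S id with hR0def
  have hAt : IsUnit At.det := isUnit_iff_ne_zero.mpr hdet
  -- Step: row space equality and factorization A = C * R0
  have hspan : Submodule.span ℝ (Set.range R0) = Submodule.span ℝ (Set.range A) := by
    apply Submodule.eq_of_le_of_finrank_le
    · apply Submodule.span_mono
      rintro x ⟨a, rfl⟩
      exact ⟨S a, rfl⟩
    · have e1 := Matrix.rank_eq_finrank_span_row A
      have e2 := Matrix.rank_eq_finrank_span_row R0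
      rw [hrank] at e1
      rw [hrows] at e2
      exact (e1.symm.trans e2).le
  have hCex : ∀ i, ∃ c : Fin r → ℝ, ∑ a, c a • R0 a = A i := by
    intro i
    have : A i ∈ Submodule.span ℝ (Set.range R0) := by
      rw [hspan]
      exact Submodule.subset_span ⟨i, rfl⟩
    exact (Submodule.mem_span_range_iff_exists_fun ℝ).mp this
  choose C hC using hCex
  have hA : A = Matrix.of C * R0 := by
    ext i j
    rw [Matrix.mul_apply]
    have := congrFun (hC i) j
    simpa [Finset.sum_apply] using this.symm
  have hB : B = Matrix.of C * At := by
    ext i a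
    have := congrFun (congrFun hA i) (T a)
    simpa [Matrix.mul_apply, hBdef, hAtdef, hR0def] using this
  -- Gram matrix invertible
  have hG : IsUnit (Bᵀ * B).det := by
    rw [isUnit_iff_ne_zero]
    intro h0
    obtain ⟨v, hv, hGv⟩ := (Matrix.exists_mulVec_eq_zero_iff).mpr h0
    have hBv : B *ᵥ v = 0 := by
      have h4 : (B *ᵥ v) ⬝ᵥ (B *ᵥ v) = 0 := by
        have h5 : v ⬝ᵥ ((Bᵀ * B) *ᵥ v) = 0 := by rw [hGv, dotProduct_zero]
        rwa [← Matrix.mulVec_mulVec, Matrix.dotProduct_mulVec, Matrix.vecMul_transpose] at h5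
      exact dotProduct_self_eq_zero.mp h4
    have hAtv : At *ᵥ v = 0 := by
      ext i
      have := congrFun hBv (S i)
      simpa [Matrix.mulVec, dotProduct, hBdef, hAtdef] using this
    exact hdet (Matrix.exists_mulVec_eq_zero_iff.mp ⟨v, hv, hAtv⟩)
  -- A*Hstar fixes B
  have hBB : A * Hstar * B = B := by
    ext i a
    have := congrFun (congrFun h1 i) (T a)
    simpa [Matrix.mul_apply, hBdef] using this
  have hBt : Bᵀ * (A * Hstar) = Bᵀ := by
    have := congrArg Matrix.transpose hBB
    rw [Matrix.transpose_mul] at this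
    rw [h3] at this
    exact this
  -- key identity
  have e1 : Bᵀ * Matrix.of C * At = Bᵀ * B := by rw [Matrix.mul_assoc, ← hB]
  have e2 : Bᵀ * Matrix.of C = (Bᵀ * B) * At⁻¹ := by
    calc Bᵀ * Matrix.of C = Bᵀ * Matrix.of C * (At * At⁻¹) := by
          rw [Matrix.mul_nonsing_inv At hAt, Matrix.mul_one]
      _ = (Bᵀ * B) * At⁻¹ := by rw [← Matrix.mul_assoc, e1]
  have e3 : Bᵀ * A = (Bᵀ * B) * (At⁻¹ * R0) := by
    rw [hA, ← Matrix.mul_assoc, e2, Matrix.mul_assoc]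
  have key : (Bᵀ * B)⁻¹ * Bᵀ = At⁻¹ * R0 * Hstar := by
    calc (Bᵀ * B)⁻¹ * Bᵀ = (Bᵀ * B)⁻¹ * (Bᵀ * (A * Hstar)) := by rw [hBt]
      _ = (Bᵀ * B)⁻¹ * (Bᵀ * A) * Hstar := by
          rw [Matrix.mul_assoc ((Bᵀ * B)⁻¹), ← Matrix.mul_assoc Bᵀ]
      _ = (Bᵀ * B)⁻¹ * ((Bᵀ * B) * (At⁻¹ * R0)) * Hstar := by rw [e3]
      _ = At⁻¹ * R0 * Hstar := by
          rw [Matrix.nonsing_inv_mul_cancel_left _ _ hG]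
  set M : Matrix (Fin r) (Fin n) ℝ := At⁻¹ * R0 with hMdef
  -- entrywise bound
  have hM : ∀ a v, |M a v| ≤ 1 + ε := by
    intro a v
    have hdet2 : |(A.submatrix S (Function.update T a v)).det| ≤ (1 + ε) * |At.det| := by
      by_cases hvr : v ∈ Set.range T
      · obtain ⟨k, rfl⟩ := hvr
        by_cases hk : k = a
        · subst hk
          rw [Function.update_eq_self]
          nlinarith [abs_nonneg At.det]
        · have hz : (A.submatrix S (Function.update T a (T k))).det = 0 := by
            apply Matrix.det_zero_of_column_eq (Ne.symm hk)
            intro i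
            simp [Matrix.submatrix_apply, Function.update_apply, Ne.symm hk, hk]
          rw [hz, abs_zero]
          positivity
      · exact hlocal a v hvr
    have hup : At.updateCol a (fun k => A (S k) v) = A.submatrix S (Function.update T a v) := by
      ext i k
      rw [Matrix.updateCol_apply]
      by_cases hk : k = a <;> simp [hk, Matrix.submatrix_apply, Function.update_apply, hAtdef]
    have hcr := congrFun (Matrix.det_smul_inv_mulVec_eq_cramer At (fun k => A (S k) v) hAt) a
    rw [Matrix.cramer_apply, hup] at hcr
    have hMav : M a v = (A.submatrix S (Function.update T a v)).det / At.det := by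
      have hM2 : M a v = (At⁻¹ *ᵥ fun k => A (S k) v) a := by
        simp [hMdef, Matrix.mul_apply, Matrix.mulVec, dotProduct, hR0def]
      rw [hM2, ← hcr]
      simp only [Pi.smul_apply, smul_eq_mul]
      field_simp
    rw [hMav, abs_div, div_le_iff₀ (abs_pos.mpr hdet)]
    exact hdet2
  have hrow : ∀ a j, H (T a) j = (M * Hstar) a j := by
    intro a j
    rw [hHT a j, key]
  -- final sum
  have habs : ∀ a j, |H (T a) j| ≤ (1 + ε) * ∑ v, |Hstar v j| := by
    intro a j
    rw [hrow a j, Matrix.mul_apply]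
    calc |∑ v, M a v * Hstar v j| ≤ ∑ v, |M a v * Hstar v j| :=
          Finset.abs_sum_le_sum_abs _ _
      _ ≤ ∑ v, (1 + ε) * |Hstar v j| := by
          apply Finset.sum_le_sum
          intro v _
          rw [abs_mul]
          exact mul_le_mul_of_nonneg_right (hM a v) (abs_nonneg _)
      _ = (1 + ε) * ∑ v, |Hstar v j| := by rw [Finset.mul_sum]
  have hzero : ∀ i ∈ Finset.univ, i ∉ Finset.univ.image T → ∑ j, |H i j| = 0 := by
    intro i _ hi
    have : i ∉ Set.range T := by
      intro ⟨a, ha⟩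
      exact hi (Finset.mem_image.mpr ⟨a, Finset.mem_univ a, ha⟩)
    simp [hH0 i _ this]
  calc ∑ i, ∑ j, |H i j| = ∑ i ∈ Finset.univ.image T, ∑ j, |H i j| :=
        (Finset.sum_subset (Finset.subset_univ _) hzero).symm
    _ = ∑ a, ∑ j, |H (T a) j| :=
        Finset.sum_image (fun x _ y _ h => hT h)
    _ ≤ ∑ a : Fin r, ∑ j, (1 + ε) * ∑ v, |Hstar v j| := by
        apply Finset.sum_le_sum
        intro a _
        exact Finset.sum_le_sum fun j _ => habs a j
    _ = (r : ℝ) * (1 + ε) * ∑ i, ∑ j, |Hstar i j| := by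
        rw [Finset.sum_const, Finset.card_univ, Fintype.card_fin, nsmul_eq_mul]
        rw [← Finset.mul_sum, Finset.sum_comm]
        ring
end

section
/- Let A be an n×n real symmetric matrix of rank r, with nonsingular r×r principal submatrix A[S] where S = {1,…,r−1,r} and T = {1,…,r−1,r+1}. If x is the unique solution of A[S]x = a_T where a_T = A[S, {r+1}], then det(A[S,T]) = x_r · det(A[S]) and det(A[T]) = x_r² · det(A[S]). -/
open Matrix

lemma my_rank_submatrix_le {m n k l : Type*} [Fintype m] [Fintype n] [Fintype k] [Fintype l]
    [DecidableEq n] (A : Matrix m n ℝ) (f : k → m) (g : l → n) :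
    (A.submatrix f g).rank ≤ A.rank := by
  have hsub : LinearMap.range (A.submatrix f g).mulVecLin ≤
      (LinearMap.range A.mulVecLin).map (LinearMap.funLeft ℝ ℝ f) := by
    rintro y ⟨v, rfl⟩
    refine ⟨A *ᵥ (fun k' => ∑ j, if g j = k' then v j else 0), ⟨_, rfl⟩, ?_⟩
    funext i
    simp only [LinearMap.funLeft_apply, mulVecLin_apply, mulVec, dotProduct,
      submatrix_apply, Finset.mul_sum]
    rw [Finset.sum_comm]
    refine Finset.sum_congr rfl fun j _ => ?_
    simp [eq_comm, mul_ite, mul_zero]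
  calc (A.submatrix f g).rank
      ≤ Module.finrank ℝ ((LinearMap.range A.mulVecLin).map (LinearMap.funLeft ℝ ℝ f)) :=
        Submodule.finrank_mono hsub
    _ ≤ A.rank := Submodule.finrank_map_le _ _

theorem swap_det_identities (n r : ℕ) (hr : 0 < r) (hn : r < n)
    (A : Matrix (Fin n) (Fin n) ℝ) (hAsym : Aᵀ = A) (hrank : A.rank = r) :
    let S : Fin r → Fin n := fun a => ⟨a.val, lt_trans a.isLt hn⟩
    let T : Fin r → Fin n := fun a =>
      if a.val + 1 = r then ⟨r, hn⟩ else ⟨a.val, lt_trans a.isLt hn⟩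
    let aT : Fin r → ℝ := fun a => A (S a) ⟨r, hn⟩
    (A.submatrix S S).det ≠ 0 →
    ∀ x : Fin r → ℝ, (A.submatrix S S).mulVec x = aT →
      (A.submatrix S T).det = x ⟨r - 1, by omega⟩ * (A.submatrix S S).det ∧
      (A.submatrix T T).det = x ⟨r - 1, by omega⟩ ^ 2 * (A.submatrix S S).det := by
  intro S T aT hdet x hx
  have hA' : ∀ i j : Fin n, A j i = A i j := fun i j => congrFun (congrFun hAsym i) j
  set last : Fin r := ⟨r - 1, by omega⟩ with hlastdef
  have hlastval : (last : Fin r).val + 1 = r := by show r - 1 + 1 = r; omega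
  have hTlast : T last = ⟨r, hn⟩ := by simp [T, hlastval]
  have hTne : ∀ a : Fin r, a ≠ last → T a = S a := by
    intro a ha
    have h1 : a.val + 1 ≠ r := by
      intro h; apply ha; apply Fin.ext; omega
    simp [T, S, h1]
  set B := A.submatrix S S with hBdef
  have hBsym : ∀ i j, B i j = B j i := fun i j => hA' _ _
  -- the (r+1)×(r+1) principal submatrix has zero determinant
  let S' : Fin (r+1) → Fin n := fun a => ⟨a.val, by omega⟩
  have hdet0 : (A.submatrix S' S').det = 0 := by
    by_contra h
    have hunit : IsUnit (A.submatrix S' S') :=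
      (Matrix.isUnit_iff_isUnit_det _).2 (isUnit_iff_ne_zero.2 h)
    have h1 : (A.submatrix S' S').rank = r + 1 := by
      rw [Matrix.rank_of_isUnit _ hunit, Fintype.card_fin]
    have h2 := my_rank_submatrix_le A S' S'
    rw [h1, hrank] at h2
    omega
  -- block decomposition
  let Bc : Matrix (Fin r) (Fin 1) ℝ := fun i _ => aT i
  let Br : Matrix (Fin 1) (Fin r) ℝ := fun _ j => aT j
  let D : Matrix (Fin 1) (Fin 1) ℝ := fun _ _ => A ⟨r, hn⟩ ⟨r, hn⟩
  have hblock : (A.submatrix S' S').submatrix finSumFinEquiv finSumFinEquiv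
      = fromBlocks B Bc Br D := by
    ext i j
    cases i with
    | inl i =>
      cases j with
      | inl j =>
        simp only [submatrix_apply, finSumFinEquiv_apply_left, fromBlocks_apply₁₁]
        congr 1 <;> apply Fin.ext <;> simp [S', S]
      | inr j =>
        simp only [submatrix_apply, finSumFinEquiv_apply_right, fromBlocks_apply₁₂]
        show A _ _ = A (S i) ⟨r, hn⟩
        congr 1 <;> apply Fin.ext <;> simp [S', S]
    | inr i =>
      cases j with
      | inl j =>
        simp only [submatrix_apply, finSumFinEquiv_apply_left,
          finSumFinEquiv_apply_right, fromBlocks_apply₂₁]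
        show A _ _ = aT j
        have : A (S' (Fin.natAdd r i)) (S' (Fin.castAdd 1 j)) = A ⟨r, hn⟩ (S j) := by
          congr 1 <;> apply Fin.ext <;> simp [S', S, Fin.natAdd, Fin.castAdd]
        rw [this]
        exact hA' _ _
      | inr j =>
        simp only [submatrix_apply, finSumFinEquiv_apply_right, fromBlocks_apply₂₂]
        show A _ _ = A ⟨r, hn⟩ ⟨r, hn⟩
        congr 1 <;> apply Fin.ext <;> simp [S', Fin.natAdd]
  have hdetM : (fromBlocks B Bc Br D).det = 0 := by
    rw [← hblock, det_submatrix_equiv_self]; exact hdet0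
  haveI : Invertible B := B.invertibleOfIsUnitDet (isUnit_iff_ne_zero.2 hdet)
  -- Schur complement gives A_{rr} = ∑ aT j * x j
  let X : Matrix (Fin r) (Fin 1) ℝ := fun i _ => x i
  have hBc : B * X = Bc := by
    ext i j
    simp only [mul_apply, Bc, X]
    exact congrFun hx i
  have hschur := Matrix.det_fromBlocks₁₁ B Bc Br D
  rw [hdetM, ← hBc, show Br * ⅟B * (B * X) = Br * (⅟B * B) * X by
    simp [Matrix.mul_assoc], invOf_mul_self, Matrix.mul_one] at hschur
  have hDdet : (D - Br * X).det = 0 := by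
    rcases mul_eq_zero.1 hschur.symm with h | h
    · exact absurd h hdet
    · exact h
  have hArr : A ⟨r, hn⟩ ⟨r, hn⟩ = ∑ j, aT j * x j := by
    have := hDdet
    rw [Matrix.det_fin_one] at this
    have h2 : D 0 0 - (Br * X) 0 0 = 0 := this
    rw [mul_apply] at h2
    simp only [D, mul_apply, Br, X] at h2
    linarith [h2]
  -- the column-swap matrix P
  let P : Matrix (Fin r) (Fin r) ℝ := (1 : Matrix (Fin r) (Fin r) ℝ).updateCol last x
  have hdetP : P.det = x last := by
    show ((1 : Matrix (Fin r) (Fin r) ℝ).updateCol last x).det = x last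
    rw [← Matrix.cramer_apply, Matrix.cramer_one]
    rfl
  have hBP : B * P = A.submatrix S T := by
    ext i j
    by_cases hj : j = last
    · subst hj
      simp only [mul_apply, P, Matrix.updateCol_apply, if_pos rfl, submatrix_apply, hTlast]
      exact congrFun hx i
    · have : ∀ k, P k j = (1 : Matrix (Fin r) (Fin r) ℝ) k j := fun k => by
        simp [P, Matrix.updateCol_apply, hj]
      simp only [mul_apply, this, one_apply, mul_ite, mul_one, mul_zero,
        Finset.sum_ite_eq', Finset.mem_univ, if_pos, submatrix_apply, hTne j hj]
      rfl
  have hPBP : Pᵀ * (B * P) = A.submatrix T T := by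
    rw [hBP]
    ext i j
    simp only [mul_apply, transpose_apply, submatrix_apply]
    by_cases hi : i = last
    · subst hi
      have hP : ∀ k, P k last = x k := fun k => by
        simp [P, Matrix.updateCol_apply]
      simp only [hP, hTlast]
      by_cases hj : j = last
      · subst hj
        rw [hTlast, hArr]
        exact Finset.sum_congr rfl fun k _ => by rw [mul_comm]
      · rw [hTne j hj]
        have : ∀ k, x k * A (S k) (S j) = B j k * x k := fun k => by
          rw [show A (S k) (S j) = B k j from rfl, hBsym, mul_comm]
        rw [Finset.sum_congr rfl fun k _ => this k]
        have : (∑ k, B j k * x k) = aT j := congrFun hx j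
        rw [this]
        exact hA' _ _
    · have hP : ∀ k, P k i = (1 : Matrix (Fin r) (Fin r) ℝ) k i := fun k => by
        simp [P, Matrix.updateCol_apply, hi]
      simp only [hP, one_apply, ite_mul, one_mul, zero_mul,
        Finset.sum_ite_eq, Finset.sum_ite_eq', Finset.mem_univ, if_pos]
      rw [hTne i hi]
  constructor
  · rw [← hBP, det_mul, hdetP, mul_comm]
  · rw [← hPBP, det_mul, det_mul, det_transpose, hdetP]
    ring
end

section
/- Let A ∈ ℝᵐˣⁿ have rank r. Then rank(Iₘ ⊗ A) = mr, so every extreme solution of the LP min{‖H‖₁ : AHA = A, (AH)ᵀ = AH}, equivalently min{‖vec(H)‖₁ : (Iₘ ⊗ A)vec(H) = vec(AA⁺)}, has at most mr nonzero entries. -/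
open Matrix Kronecker Module

namespace LpAuxSparse

variable {m n : ℕ}

/-- columnwise action of `A` on an `m`-tuple of vectors. -/
noncomputable def Lmap (m : ℕ) {n : ℕ} (A : Matrix (Fin m) (Fin n) ℝ) :
    (Fin m → Fin n → ℝ) →ₗ[ℝ] (Fin m → Fin m → ℝ) :=
  LinearMap.pi fun i => A.mulVecLin ∘ₗ LinearMap.proj i

noncomputable def kerEquiv (A : Matrix (Fin m) (Fin n) ℝ) :
    (Fin m → LinearMap.ker A.mulVecLin) ≃ₗ[ℝ] LinearMap.ker (Lmap m A) where
  toFun x := ⟨fun i => (x i : Fin n → ℝ), by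
    rw [LinearMap.mem_ker]
    funext i
    exact LinearMap.mem_ker.mp (x i).2⟩
  map_add' x y := rfl
  map_smul' c x := rfl
  invFun y := fun i => ⟨(y : Fin m → Fin n → ℝ) i, by
    have h := y.2
    rw [LinearMap.mem_ker] at h
    exact congrFun h i⟩
  left_inv x := rfl
  right_inv y := rfl

lemma finrank_range_Lmap (A : Matrix (Fin m) (Fin n) ℝ) :
    finrank ℝ (LinearMap.range (Lmap m A)) = m * A.rank := by
  have h1 : finrank ℝ (LinearMap.range (Lmap m A)) + finrank ℝ (LinearMap.ker (Lmap m A))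
      = m * n := by
    rw [LinearMap.finrank_range_add_finrank_ker]
    simp [finrank_pi_fintype]
  have h2 : finrank ℝ (LinearMap.ker (Lmap m A))
      = m * finrank ℝ (LinearMap.ker A.mulVecLin) := by
    rw [← (kerEquiv A).finrank_eq]
    simp [finrank_pi_fintype, Finset.sum_const]
  have h3 : A.rank + finrank ℝ (LinearMap.ker A.mulVecLin) = n := by
    have := LinearMap.finrank_range_add_finrank_ker A.mulVecLin
    simpa [Matrix.rank] using this
  have h4 : m * A.rank + m * finrank ℝ (LinearMap.ker A.mulVecLin) = m * n := by
    rw [← Nat.mul_add, h3]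
  omega

lemma rank_one_kronecker (A : Matrix (Fin m) (Fin n) ℝ) :
    ((1 : Matrix (Fin m) (Fin m) ℝ) ⊗ₖ A).rank = m * A.rank := by
  have hL : ((1 : Matrix (Fin m) (Fin m) ℝ) ⊗ₖ A).mulVecLin
      = (LinearEquiv.curry ℝ ℝ (Fin m) (Fin m)).symm.toLinearMap ∘ₗ (Lmap m A) ∘ₗ
        (LinearEquiv.curry ℝ ℝ (Fin m) (Fin n)).toLinearMap := by
    apply LinearMap.ext; intro x
    funext ik
    obtain ⟨i, k⟩ := ik
    simp [Lmap, Matrix.mulVec, dotProduct, Fintype.sum_prod_type, Matrix.one_apply,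
      Function.uncurry, ite_mul, Finset.sum_ite_eq]
  rw [Matrix.rank, hL, LinearMap.range_comp,
    LinearMap.range_comp_of_range_eq_top _ (LinearEquiv.range _),
    LinearEquiv.finrank_map_eq, finrank_range_Lmap]

noncomputable def Phi (A : Matrix (Fin m) (Fin n) ℝ) :
    Matrix (Fin n) (Fin m) ℝ →ₗ[ℝ] Matrix (Fin m) (Fin m) ℝ where
  toFun D := A * D
  map_add' := Matrix.mul_add A
  map_smul' c D := Matrix.mul_smul A c D

@[simp] lemma Phi_apply (A : Matrix (Fin m) (Fin n) ℝ) (D : Matrix (Fin n) (Fin m) ℝ) :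
    Phi A D = A * D := rfl

noncomputable def kerEquivPhi (A : Matrix (Fin m) (Fin n) ℝ) :
    (Fin m → LinearMap.ker A.mulVecLin) ≃ₗ[ℝ] LinearMap.ker (Phi A) where
  toFun x := ⟨Matrix.of fun i j => (x j : Fin n → ℝ) i, by
    rw [LinearMap.mem_ker]
    ext k j
    have h : A.mulVec (x j : Fin n → ℝ) = 0 := LinearMap.mem_ker.mp (x j).2
    have := congrFun h k
    simpa [Phi, Matrix.mul_apply, Matrix.mulVec, dotProduct] using this⟩
  map_add' x y := rfl
  map_smul' c x := rfl
  invFun y := fun j => ⟨fun i => (y : Matrix (Fin n) (Fin m) ℝ) i j, by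
    have h := y.2
    rw [LinearMap.mem_ker] at h
    rw [LinearMap.mem_ker]
    funext k
    have := congrFun (congrFun (show A * (y : Matrix (Fin n) (Fin m) ℝ) = 0 from h) k) j
    simpa [Matrix.mul_apply, Matrix.mulVec, dotProduct] using this⟩
  left_inv x := rfl
  right_inv y := rfl

lemma finrank_range_Phi (A : Matrix (Fin m) (Fin n) ℝ) :
    finrank ℝ (LinearMap.range (Phi A)) = m * A.rank := by
  have h1 : finrank ℝ (LinearMap.range (Phi A)) + finrank ℝ (LinearMap.ker (Phi A))
      = m * n := by
    rw [LinearMap.finrank_range_add_finrank_ker]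
    simp [Module.finrank_matrix, Nat.mul_comm]
  have h2 : finrank ℝ (LinearMap.ker (Phi A))
      = m * finrank ℝ (LinearMap.ker A.mulVecLin) := by
    rw [← (kerEquivPhi A).finrank_eq]
    simp [finrank_pi_fintype, Finset.sum_const]
  have h3 : A.rank + finrank ℝ (LinearMap.ker A.mulVecLin) = n := by
    have := LinearMap.finrank_range_add_finrank_ker A.mulVecLin
    simpa [Matrix.rank] using this
  have h4 : m * A.rank + m * finrank ℝ (LinearMap.ker A.mulVecLin) = m * n := by
    rw [← Nat.mul_add, h3]
  omega

end LpAuxSparse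

open LpAuxSparse

theorem lp_ahsym_extreme_sparsity (m n r : ℕ) (A : Matrix (Fin m) (Fin n) ℝ)
    (hrank : A.rank = r)
    (Aplus : Matrix (Fin n) (Fin m) ℝ)
    (hp1 : A * Aplus * A = A) (hp2 : Aplus * A * Aplus = Aplus)
    (hp3 : (A * Aplus)ᵀ = A * Aplus) (hp4 : (Aplus * A)ᵀ = Aplus * A) :
    ((1 : Matrix (Fin m) (Fin m) ℝ) ⊗ₖ A).rank = m * r ∧
    ∀ Hp Hm : Matrix (Fin n) (Fin m) ℝ,
      (Hp, Hm) ∈ Set.extremePoints ℝ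
        {q : Matrix (Fin n) (Fin m) ℝ × Matrix (Fin n) (Fin m) ℝ |
          A * (q.1 - q.2) = A * Aplus ∧ (∀ i j, 0 ≤ q.1 i j) ∧ (∀ i j, 0 ≤ q.2 i j)} →
      Set.ncard {ij : Fin n × Fin m | Hp ij.1 ij.2 - Hm ij.1 ij.2 ≠ 0} ≤ m * r := by
  classical
  constructor
  · rw [rank_one_kronecker, hrank]
  · rintro Hp Hm hext
    obtain ⟨hmem, hext2⟩ := hext
    obtain ⟨hfeas, hHp, hHm⟩ := hmem
    by_contra hcard
    push_neg at hcard
    set F : Finset (Fin n × Fin m) :=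
      Finset.univ.filter (fun ij => Hp ij.1 ij.2 - Hm ij.1 ij.2 ≠ 0) with hFdef
    have hTF : {ij : Fin n × Fin m | Hp ij.1 ij.2 - Hm ij.1 ij.2 ≠ 0} = ↑F := by
      ext ij; simp [hFdef]
    rw [hTF, Set.ncard_coe_finset] at hcard
    -- the embedding of coefficient vectors supported on F
    let Ψ : ({x // x ∈ F} → ℝ) →ₗ[ℝ] Matrix (Fin n) (Fin m) ℝ :=
      { toFun := fun c => Matrix.of fun i j => if h : (i, j) ∈ F then c ⟨(i, j), h⟩ else 0
        map_add' := by
          intro c d; ext i j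
          simp only [Matrix.of_apply, Matrix.add_apply, Pi.add_apply]
          split_ifs <;> simp
        map_smul' := by
          intro a c; ext i j
          simp only [Matrix.of_apply, Matrix.smul_apply, Pi.smul_apply, RingHom.id_apply,
            smul_eq_mul]
          split_ifs <;> simp }
    -- the composite cannot be injective
    have hni : ¬ Function.Injective ((Phi A) ∘ₗ Ψ) := by
      intro hinj
      have h1 : finrank ℝ ({x // x ∈ F} → ℝ) = F.card := by
        simp [Module.finrank_pi]
      have h2 := LinearMap.finrank_range_of_inj hinj
      have h3 : finrank ℝ (LinearMap.range ((Phi A) ∘ₗ Ψ))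
          ≤ finrank ℝ (LinearMap.range (Phi A)) :=
        Submodule.finrank_mono (LinearMap.range_comp_le_range _ _)
      rw [h2, h1, finrank_range_Phi, hrank] at h3
      omega
    rw [← LinearMap.ker_eq_bot] at hni
    obtain ⟨c, hcker, hc0⟩ := Submodule.exists_mem_ne_zero_of_ne_bot hni
    set D : Matrix (Fin n) (Fin m) ℝ := Ψ c with hDdef
    have hAD : A * D = 0 := LinearMap.mem_ker.mp hcker
    have hDsupp : ∀ i j, (i, j) ∉ F → D i j = 0 := by
      intro i j h
      simp only [hDdef, Ψ, LinearMap.coe_mk, AddHom.coe_mk, Matrix.of_apply]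
      exact dif_neg h
    have hDne : D ≠ 0 := by
      intro h0
      obtain ⟨t, ht⟩ := Function.ne_iff.mp hc0
      apply ht
      have hmem : (t.1.1, t.1.2) ∈ F := t.2
      have hDt : D t.1.1 t.1.2 = c t := by
        simp only [hDdef, Ψ, LinearMap.coe_mk, AddHom.coe_mk, Matrix.of_apply]
        rw [dif_pos hmem]
      rw [h0] at hDt
      simpa using hDt.symm
    -- perturbation directions
    set P : Matrix (Fin n) (Fin m) ℝ :=
      Matrix.of (fun i j => if 0 < Hp i j then D i j else 0) with hPdef
    set Q : Matrix (Fin n) (Fin m) ℝ :=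
      Matrix.of (fun i j => if 0 < Hp i j then 0 else -D i j) with hQdef
    have hPQ : P - Q = D := by
      ext i j
      by_cases h : 0 < Hp i j <;> simp [hPdef, hQdef, h]
    have hPpos : ∀ i j, P i j ≠ 0 → 0 < Hp i j := by
      intro i j h
      by_contra hc
      simp [hPdef, hc] at h
    have hQpos : ∀ i j, Q i j ≠ 0 → 0 < Hm i j := by
      intro i j h
      have hnp : ¬ 0 < Hp i j := by intro hc; simp [hQdef, hc] at h
      have hD : D i j ≠ 0 := by
        intro hc; simp [hQdef, hc] at h
      have hmemF : (i, j) ∈ F := by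
        by_contra hc; exact hD (hDsupp i j hc)
      have hneF : Hp i j - Hm i j ≠ 0 := by
        simpa [hFdef] using hmemF
      have hp0 : Hp i j = 0 := le_antisymm (not_lt.mp hnp) (hHp i j)
      rcases lt_or_eq_of_le (hHm i j) with h' | h'
      · exact h'
      · exact absurd (by rw [hp0, show Hm i j = 0 from h'.symm]; ring) hneF
    have hFne : F.Nonempty := Finset.card_pos.mp (lt_of_le_of_lt (Nat.zero_le _) hcard)
    have hne' : Nonempty (Fin n × Fin m) := ⟨hFne.choose⟩
    have huniv : (Finset.univ : Finset (Fin n × Fin m)).Nonempty := Finset.univ_nonempty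
    set f : Fin n × Fin m → ℝ := fun ij =>
      min (if P ij.1 ij.2 = 0 then 1 else Hp ij.1 ij.2 / |P ij.1 ij.2|)
          (if Q ij.1 ij.2 = 0 then 1 else Hm ij.1 ij.2 / |Q ij.1 ij.2|) with hfdef
    set ε : ℝ := Finset.inf' Finset.univ huniv f with hεdef
    have hεpos : 0 < ε := by
      rw [hεdef, Finset.lt_inf'_iff]
      intro ij _
      refine lt_min ?_ ?_
      · split_ifs with h
        · norm_num
        · exact div_pos (hPpos _ _ h) (abs_pos.mpr h)
      · split_ifs with h
        · norm_num
        · exact div_pos (hQpos _ _ h) (abs_pos.mpr h)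
    have hboundP : ∀ i j, ε * |P i j| ≤ Hp i j := by
      intro i j
      by_cases h : P i j = 0
      · simpa [h] using hHp i j
      · have h1 : ε ≤ f (i, j) := Finset.inf'_le f (Finset.mem_univ (i, j))
        have h2 : ε ≤ Hp i j / |P i j| := by
          rw [hfdef] at h1
          simp only [if_neg h] at h1
          exact le_trans h1 (min_le_left _ _)
        exact (le_div_iff₀ (abs_pos.mpr h)).mp h2
    have hboundQ : ∀ i j, ε * |Q i j| ≤ Hm i j := by
      intro i j
      by_cases h : Q i j = 0
      · simpa [h] using hHm i j
      · have h1 : ε ≤ f (i, j) := Finset.inf'_le f (Finset.mem_univ (i, j))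
        have h2 : ε ≤ Hm i j / |Q i j| := by
          rw [hfdef] at h1
          simp only [if_neg h] at h1
          exact le_trans h1 (min_le_right _ _)
        exact (le_div_iff₀ (abs_pos.mpr h)).mp h2
    have habsP : ∀ i j, |ε * P i j| ≤ Hp i j := by
      intro i j
      rw [abs_mul, abs_of_pos hεpos]
      exact hboundP i j
    have habsQ : ∀ i j, |ε * Q i j| ≤ Hm i j := by
      intro i j
      rw [abs_mul, abs_of_pos hεpos]
      exact hboundQ i j
    -- the two feasible perturbed points
    have hADsm : A * (ε • D) = 0 := by rw [Matrix.mul_smul, hAD, smul_zero]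
    have hsplit1 : (Hp + ε • P) - (Hm + ε • Q) = (Hp - Hm) + ε • D := by
      rw [← hPQ, smul_sub]; abel
    have hsplit2 : (Hp - ε • P) - (Hm - ε • Q) = (Hp - Hm) - ε • D := by
      rw [← hPQ, smul_sub]; abel
    have hy : ((Hp + ε • P, Hm + ε • Q) :
        Matrix (Fin n) (Fin m) ℝ × Matrix (Fin n) (Fin m) ℝ) ∈
        {q : Matrix (Fin n) (Fin m) ℝ × Matrix (Fin n) (Fin m) ℝ |
          A * (q.1 - q.2) = A * Aplus ∧ (∀ i j, 0 ≤ q.1 i j) ∧ (∀ i j, 0 ≤ q.2 i j)} := by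
      refine ⟨?_, ?_, ?_⟩
      · show A * ((Hp + ε • P) - (Hm + ε • Q)) = A * Aplus
        rw [hsplit1, Matrix.mul_add, hADsm, add_zero, hfeas]
      · intro i j
        have h1 := habsP i j
        have h2 := neg_abs_le (ε * P i j)
        have : (Hp + ε • P) i j = Hp i j + ε * P i j := by
          simp [Matrix.add_apply, Matrix.smul_apply, smul_eq_mul]
        show 0 ≤ (Hp + ε • P) i j
        rw [this]; linarith
      · intro i j
        have h1 := habsQ i j
        have h2 := neg_abs_le (ε * Q i j)
        have : (Hm + ε • Q) i j = Hm i j + ε * Q i j := by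
          simp [Matrix.add_apply, Matrix.smul_apply, smul_eq_mul]
        show 0 ≤ (Hm + ε • Q) i j
        rw [this]; linarith
    have hz : ((Hp - ε • P, Hm - ε • Q) :
        Matrix (Fin n) (Fin m) ℝ × Matrix (Fin n) (Fin m) ℝ) ∈
        {q : Matrix (Fin n) (Fin m) ℝ × Matrix (Fin n) (Fin m) ℝ |
          A * (q.1 - q.2) = A * Aplus ∧ (∀ i j, 0 ≤ q.1 i j) ∧ (∀ i j, 0 ≤ q.2 i j)} := by
      refine ⟨?_, ?_, ?_⟩
      · show A * ((Hp - ε • P) - (Hm - ε • Q)) = A * Aplus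
        rw [hsplit2, Matrix.mul_sub, hADsm, sub_zero, hfeas]
      · intro i j
        have h1 := habsP i j
        have h2 := le_abs_self (ε * P i j)
        have : (Hp - ε • P) i j = Hp i j - ε * P i j := by
          simp [Matrix.sub_apply, Matrix.smul_apply, smul_eq_mul]
        show 0 ≤ (Hp - ε • P) i j
        rw [this]; linarith
      · intro i j
        have h1 := habsQ i j
        have h2 := le_abs_self (ε * Q i j)
        have : (Hm - ε • Q) i j = Hm i j - ε * Q i j := by
          simp [Matrix.sub_apply, Matrix.smul_apply, smul_eq_mul]
        show 0 ≤ (Hm - ε • Q) i j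
        rw [this]; linarith
    have hseg : (Hp, Hm) ∈ openSegment ℝ (Hp + ε • P, Hm + ε • Q) (Hp - ε • P, Hm - ε • Q) := by
      refine ⟨1/2, 1/2, by norm_num, by norm_num, by norm_num, ?_⟩
      have e1 : (1/2 : ℝ) • (Hp + ε • P) + (1/2 : ℝ) • (Hp - ε • P) = Hp := by module
      have e2 : (1/2 : ℝ) • (Hm + ε • Q) + (1/2 : ℝ) • (Hm - ε • Q) = Hm := by module
      exact Prod.ext e1 e2
    have hy_eq := hext2 hy hz hseg
    have h1 : ε • P = 0 := by
      have := congrArg Prod.fst hy_eq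
      simpa using add_eq_left.mp this
    have h2 : ε • Q = 0 := by
      have := congrArg Prod.snd hy_eq
      simpa using add_eq_left.mp this
    have hP0 : P = 0 := by
      rcases smul_eq_zero.mp h1 with h | h
      · exact absurd h (ne_of_gt hεpos)
      · exact h
    have hQ0 : Q = 0 := by
      rcases smul_eq_zero.mp h2 with h | h
      · exact absurd h (ne_of_gt hεpos)
      · exact h
    exact hDne (by rw [← hPQ, hP0, hQ0, sub_zero])
end

section
/- Let A ∈ ℝᵐˣⁿ have rank r. Then the stacked matrix [Iₘ ⊗ A ; (AA⁺ − Iₘ) ⊗ Iₙ] has rank mr + (m−r)(n−r). -/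
open Matrix Kronecker

/-! With `Q = A G` and `P = G A` for any `G` with `A G A = A`, both are idempotents of trace
`rank A = r`, and `T = I ⊗ P + (I - Q) ⊗ (I - P)` is idempotent of trace `m r + (m - r)(n - r)`.
The stacked matrix `M` satisfies `M T = M`, while `T = [I ⊗ G, -I ⊗ (I - P)] M`; so `M` and `T`
have the same row space, and `rank M = rank T = tr T`. -/

namespace Matrix

variable {R : Type*} {l m n : Type*} [Fintype l] [Fintype m] [Fintype n]

theorem trace_eq_rank_of_isIdempotentElem {K : Type*} [Field K] [DecidableEq n]
    {E : Matrix n n K} (hE : IsIdempotentElem E) : E.trace = E.rank := by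
  have hE' : IsIdempotentElem E.mulVecLin := by
    rw [IsIdempotentElem, Module.End.mul_eq_comp, ← mulVecLin_mul, hE.eq]
  rw [← trace_toLin'_eq, toLin'_apply', (LinearMap.IsIdempotentElem.isProj_range _ hE').trace,
    rank]

theorem rank_eq_rank_of_mul_eq_self [CommRing R] [StrongRankCondition R]
    {M : Matrix l m R} {T : Matrix m m R} {C : Matrix m l R}
    (hMT : M * T = M) (hCM : C * M = T) : M.rank = T.rank :=
  le_antisymm (hMT ▸ rank_mul_le_right M T) (hCM ▸ rank_mul_le_right C M)

section GeneralizedInverse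

variable [CommRing R] {A : Matrix m n R} {G : Matrix n m R}

theorem isIdempotentElem_mul_of_mul_mul_eq_self (hG : A * G * A = A) :
    IsIdempotentElem (A * G) := by
  rw [IsIdempotentElem, ← Matrix.mul_assoc, hG]

theorem isIdempotentElem_mul_of_mul_mul_eq_self' (hG : A * G * A = A) :
    IsIdempotentElem (G * A) := by
  rw [IsIdempotentElem, Matrix.mul_assoc, ← Matrix.mul_assoc A, hG]

theorem rank_mul_eq_of_mul_mul_eq_self [StrongRankCondition R] (hG : A * G * A = A) :
    (A * G).rank = A.rank :=
  le_antisymm (rank_mul_le_left A G) (by simpa only [hG] using rank_mul_le_left (A * G) A)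

end GeneralizedInverse

section KroneckerProjection

variable [CommRing R] [DecidableEq m] [DecidableEq n] {P : Matrix n n R} {Q : Matrix m m R}

theorem isIdempotentElem_one_kronecker_add_kronecker (hP : IsIdempotentElem P)
    (hQ : IsIdempotentElem Q) :
    IsIdempotentElem ((1 : Matrix m m R) ⊗ₖ P + (1 - Q) ⊗ₖ (1 - P)) := by
  have hPP : P * (1 - P) = 0 := by rw [Matrix.mul_sub, Matrix.mul_one, hP.eq, sub_self]
  have hPP' : (1 - P) * P = 0 := by rw [Matrix.sub_mul, Matrix.one_mul, hP.eq, sub_self]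
  simp only [IsIdempotentElem, Matrix.add_mul, Matrix.mul_add, ← mul_kronecker_mul, hPP, hPP',
    kronecker_zero, hP.eq, hQ.one_sub.eq, hP.one_sub.eq, Matrix.one_mul, Matrix.mul_one, add_zero,
    zero_add]

theorem trace_one_kronecker_add_kronecker :
    ((1 : Matrix m m R) ⊗ₖ P + (1 - Q) ⊗ₖ (1 - P)).trace
      = Fintype.card m * P.trace + (Fintype.card m - Q.trace) * (Fintype.card n - P.trace) := by
  simp only [trace_add, trace_kronecker, trace_sub, trace_one]

end KroneckerProjection

theorem rank_fromRows_one_kronecker_eq [CommRing R] [StrongRankCondition R] [DecidableEq m]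
    [DecidableEq n] {A : Matrix m n R} {G : Matrix n m R} (hG : A * G * A = A) :
    (fromRows ((1 : Matrix m m R) ⊗ₖ A) ((A * G - 1) ⊗ₖ (1 : Matrix n n R))).rank
      = ((1 : Matrix m m R) ⊗ₖ (G * A) + (1 - A * G) ⊗ₖ (1 - G * A)).rank := by
  have hAP : A * (G * A) = A := by rw [← Matrix.mul_assoc, hG]
  have hQQ : (A * G - 1) * (1 - A * G) = A * G - 1 := by
    rw [← neg_sub, Matrix.neg_mul, (isIdempotentElem_mul_of_mul_mul_eq_self hG).one_sub.eq]
  refine rank_eq_rank_of_mul_eq_self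
    (C := fromCols (1 ⊗ₖ G) ((-1 : Matrix m m R) ⊗ₖ (1 - G * A))) ?_ ?_
  · rw [fromRows_mul, Matrix.mul_add, Matrix.mul_add, ← mul_kronecker_mul, ← mul_kronecker_mul,
      ← mul_kronecker_mul, ← mul_kronecker_mul, hAP, Matrix.mul_sub A, hAP, hQQ]
    simp only [Matrix.one_mul, Matrix.mul_one, sub_self, kronecker_zero, add_zero,
      ← kronecker_add, add_sub_cancel]
  · rw [fromCols_mul_fromRows, ← mul_kronecker_mul, ← mul_kronecker_mul]
    simp only [Matrix.one_mul, Matrix.mul_one, Matrix.neg_mul, neg_sub]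

end Matrix

theorem stacked_kronecker_rank_general (m n r : ℕ) (A : Matrix (Fin m) (Fin n) ℝ)
    (hrank : A.rank = r)
    (Aplus : Matrix (Fin n) (Fin m) ℝ)
    (hp1 : A * Aplus * A = A) :
    (Matrix.fromRows ((1 : Matrix (Fin m) (Fin m) ℝ) ⊗ₖ A)
        ((A * Aplus - 1) ⊗ₖ (1 : Matrix (Fin n) (Fin n) ℝ))).rank
      = m * r + (m - r) * (n - r) := by
  have hQ := isIdempotentElem_mul_of_mul_mul_eq_self hp1
  have hP := isIdempotentElem_mul_of_mul_mul_eq_self' hp1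
  have htrQ : (A * Aplus).trace = r := by
    rw [trace_eq_rank_of_isIdempotentElem hQ, rank_mul_eq_of_mul_mul_eq_self hp1, hrank]
  have htrP : (Aplus * A).trace = r := by rw [← trace_mul_comm, htrQ]
  have hrm : r ≤ m := hrank ▸ A.rank_le_height
  have hrn : r ≤ n := hrank ▸ A.rank_le_width
  rw [rank_fromRows_one_kronecker_eq hp1]
  apply Nat.cast_injective (R := ℝ)
  rw [← trace_eq_rank_of_isIdempotentElem (isIdempotentElem_one_kronecker_add_kronecker hP hQ),
    trace_one_kronecker_add_kronecker, htrP, htrQ]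
  push_cast [Fintype.card_fin, Nat.cast_sub hrm, Nat.cast_sub hrn]
  ring

theorem stacked_kronecker_rank (m n r : ℕ) (A : Matrix (Fin m) (Fin n) ℝ)
    (hrank : A.rank = r)
    (Aplus : Matrix (Fin n) (Fin m) ℝ)
    (hp1 : A * Aplus * A = A) (hp2 : Aplus * A * Aplus = Aplus)
    (hp3 : (A * Aplus)ᵀ = A * Aplus) (hp4 : (Aplus * A)ᵀ = Aplus * A) :
    (Matrix.fromRows ((1 : Matrix (Fin m) (Fin m) ℝ) ⊗ₖ A)
        ((A * Aplus - 1) ⊗ₖ (1 : Matrix (Fin n) (Fin n) ℝ))).rank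
      = m * r + (m - r) * (n - r) :=
  stacked_kronecker_rank_general m n r A hrank Aplus hp1
end

section
/- Let A = [1 0 k k; 0 1 k −k] for k > 0, a 2×4 real matrix of rank 2. The submatrix formed by columns {1,2} is a local minimizer of ‖Ã⁻¹‖₁ among 2×2 nonsingular column submatrices (every single-column swap yields 1-norm of inverse 2 + 1/k > 2), yet the submatrix of columns {3,4} has ‖Ã⁻¹‖₁ = 2/k. Hence the ratio of the locally optimal value to the global minimum is at least k. -/
open Matrix

theorem local_search_one_norm_bad_example (k : ℝ) (hk : 0 < k) :
    let A : Matrix (Fin 2) (Fin 4) ℝ := !![1, 0, k, k; 0, 1, k, -k]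
    let sub : Fin 4 → Fin 4 → Matrix (Fin 2) (Fin 2) ℝ :=
      fun c d => A.submatrix id ![c, d]
    let n1 : Matrix (Fin 2) (Fin 2) ℝ → ℝ := fun M => ∑ i, ∑ j, |M i j|
    A.rank = 2 ∧
    n1 ((sub 0 1)⁻¹) = 2 ∧
    n1 ((sub 0 2)⁻¹) = 2 + 1 / k ∧
    n1 ((sub 0 3)⁻¹) = 2 + 1 / k ∧
    n1 ((sub 1 2)⁻¹) = 2 + 1 / k ∧
    n1 ((sub 1 3)⁻¹) = 2 + 1 / k ∧
    2 + 1 / k > 2 ∧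
    n1 ((sub 2 3)⁻¹) = 2 / k ∧
    n1 ((sub 0 1)⁻¹) ≥ k * n1 ((sub 2 3)⁻¹) := by
  intro A sub n1
  have hk' : k ≠ 0 := ne_of_gt hk
  have hrank : A.rank = 2 := by
    have hB : A * (!![(1:ℝ),0;0,1;0,0;0,0] : Matrix (Fin 4) (Fin 2) ℝ) = 1 := by
      ext i j
      fin_cases i <;> fin_cases j <;>
        simp [A, Matrix.mul_apply, Fin.sum_univ_four, Matrix.one_apply,
          Matrix.vecHead, Matrix.vecTail]
    refine le_antisymm ?_ ?_
    · simpa using A.rank_le_card_height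
    · calc (2 : ℕ) = (1 : Matrix (Fin 2) (Fin 2) ℝ).rank := by
            rw [Matrix.rank_one]; simp
        _ = (A * (!![(1:ℝ),0;0,1;0,0;0,0] : Matrix (Fin 4) (Fin 2) ℝ)).rank := by
            rw [hB]
        _ ≤ A.rank := Matrix.rank_mul_le_left _ _
  have hsub : ∀ c d, sub c d = !![A 0 c, A 0 d; A 1 c, A 1 d] := by
    intro c d
    ext i j
    fin_cases i <;> fin_cases j <;> simp [sub]
  have hinv : ∀ c d (N : Matrix (Fin 2) (Fin 2) ℝ),
      (sub c d) * N = 1 → (sub c d)⁻¹ = N := fun c d N h =>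
    Matrix.inv_eq_right_inv h
  have h01 : (sub 0 1)⁻¹ = !![1,0;0,1] := by
    apply hinv
    rw [hsub]
    ext i j
    fin_cases i <;> fin_cases j <;>
      simp [A, Matrix.mul_apply, Fin.sum_univ_two, Matrix.one_apply]
  have h02 : (sub 0 2)⁻¹ = !![1,-1;0,1/k] := by
    apply hinv
    rw [hsub]
    ext i j
    fin_cases i <;> fin_cases j <;>
      · simp [A, Matrix.mul_apply, Fin.sum_univ_two, Matrix.one_apply, hk']
        try field_simp
  have h03 : (sub 0 3)⁻¹ = !![1,1;0,-(1/k)] := by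
    apply hinv
    rw [hsub]
    ext i j
    fin_cases i <;> fin_cases j <;>
      · simp [A, Matrix.mul_apply, Fin.sum_univ_two, Matrix.one_apply, hk']
        try field_simp
  have h12 : (sub 1 2)⁻¹ = !![-1,1;1/k,0] := by
    apply hinv
    rw [hsub]
    ext i j
    fin_cases i <;> fin_cases j <;>
      · simp [A, Matrix.mul_apply, Fin.sum_univ_two, Matrix.one_apply, hk']
        try field_simp
  have h13 : (sub 1 3)⁻¹ = !![1,1;1/k,0] := by
    apply hinv
    rw [hsub]
    ext i j
    fin_cases i <;> fin_cases j <;>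
      · simp [A, Matrix.mul_apply, Fin.sum_univ_two, Matrix.one_apply, hk']
        try field_simp
        try ring
  have h23 : (sub 2 3)⁻¹ = !![1/(2*k),1/(2*k);1/(2*k),-(1/(2*k))] := by
    apply hinv
    rw [hsub]
    ext i j
    fin_cases i <;> fin_cases j <;>
      · simp [A, Matrix.mul_apply, Fin.sum_univ_two, Matrix.one_apply, hk']
        try field_simp
        try ring
  have habs : |k⁻¹| = k⁻¹ := abs_of_pos (by positivity)
  have habs2 : |k⁻¹ * (2 : ℝ)⁻¹| = k⁻¹ * 2⁻¹ := abs_of_pos (by positivity)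
  have habs3 : |1/(2*k)| = 1/(2*k) := abs_of_pos (by positivity)
  refine ⟨hrank, ?_, ?_, ?_, ?_, ?_, ?_, ?_, ?_⟩
  · simp [n1, h01, Fin.sum_univ_two]; norm_num
  · simp [n1, h02, Fin.sum_univ_two, habs, habs2, habs3, one_div]; norm_num
  · simp [n1, h03, Fin.sum_univ_two, habs, habs2, habs3, one_div]; norm_num
  · simp [n1, h12, Fin.sum_univ_two, habs, habs2, habs3, one_div]; norm_num
  · simp [n1, h13, Fin.sum_univ_two, habs, habs2, habs3, one_div]; norm_num
  · have : 0 < 1/k := by positivity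
    linarith
  · simp [n1, h23, Fin.sum_univ_two]
    rw [abs_of_pos hk]
    field_simp
    ring
  · have h2 : k * (n1 ((sub 2 3)⁻¹)) = 2 := by
      simp [n1, h23, Fin.sum_univ_two]
      rw [abs_of_pos hk]
      field_simp
      ring
    have h1 : n1 ((sub 0 1)⁻¹) = 2 := by
      simp [n1, h01, Fin.sum_univ_two]; norm_num
    rw [ge_iff_le, h2, h1]
end
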